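/- (Equivalence of weak shift inclusion and the absorption property) For P ⊆ M and structuring elements B₁ ⊆ B₂: the weak negative shift inclusion B₁ ⊆_{WS,P,−} B₂ holds if and only if O_{B₁}(g)⁻¹(0) ⊆ O_{B₂}(g)⁻¹(0) for every image g : P → ℝ≥0. -/

import Mathlib

open scoped NNReal

variable {M : Type*} [AddCommGroup M]

/-- Erosion of an image `g` on pixel set `P` via structuring element `B`. -/
noncomputable def mErosion (P : Set M) (B : Finset M) (g : M → ℝ≥0) : M → ℝ≥0 :=
  fun x => sInf {y | ∃ b ∈ B, x + b ∈ P ∧ g (x + b) = y}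

/-- Dilation of an image `g` on pixel set `P` via structuring element `B`. -/
noncomputable def mDilation (P : Set M) (B : Finset M) (g : M → ℝ≥0) : M → ℝ≥0 :=
  fun x => sSup {y | ∃ b ∈ B, x - b ∈ P ∧ g (x - b) = y}

/-- Morphological opening. -/
noncomputable def mOpening (P : Set M) (B : Finset M) (g : M → ℝ≥0) : M → ℝ≥0 :=
  mDilation P B (mErosion P B g)

/-- Morphological closing. -/
noncomputable def mClosing (P : Set M) (B : Finset M) (g : M → ℝ≥0) : M → ℝ≥0 :=
  mErosion P B (mDilation P B g)

/-- Thresholding operator `τ_t`. -/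
noncomputable def mThreshold (t : ℝ≥0) (g : M → ℝ≥0) : M → ℝ≥0 :=
  fun x => if g x ≤ t then 0 else 1

/-- Positive shift inclusion condition `B₁ ⊆_{S,P,+} B₂` (without the subset requirement). -/
def shiftPos (P : Set M) (B₁ B₂ : Finset M) : Prop :=
  ∀ x ∈ P, ∀ b₂ ∈ B₂, x + b₂ ∈ P →
    ∃ b₁ ∈ B₁, x + b₁ ∈ P ∧ ∀ b ∈ B₁, b + (b₂ - b₁) ∈ B₂

/-- Negative shift inclusion condition `B₁ ⊆_{S,P,−} B₂` (without the subset requirement). -/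
def shiftNeg (P : Set M) (B₁ B₂ : Finset M) : Prop :=
  ∀ x ∈ P, ∀ b₂ ∈ B₂, x - b₂ ∈ P →
    ∃ b₁ ∈ B₁, x - b₁ ∈ P ∧ ∀ b ∈ B₁, b + (b₂ - b₁) ∈ B₂

/-- Weak positive shift inclusion `B₁ ⊆_{WS,P,+} B₂` (without the subset requirement). -/
def weakShiftPos (P : Set M) (B₁ B₂ : Finset M) : Prop :=
  ∀ x ∈ P, ∀ b₂ ∈ B₂, x + b₂ ∈ P →
    ∃ b₁ ∈ B₁, x + b₁ ∈ P ∧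
      ∀ b₁' ∈ B₁, x + b₁ - b₁' ∈ P → ∃ b₂' ∈ B₂, x + b₂ - b₂' = x + b₁ - b₁'

/-- Weak negative shift inclusion `B₁ ⊆_{WS,P,−} B₂` (without the subset requirement). -/
def weakShiftNeg (P : Set M) (B₁ B₂ : Finset M) : Prop :=
  ∀ x ∈ P, ∀ b₂ ∈ B₂, x - b₂ ∈ P →
    ∃ b₁ ∈ B₁, x - b₁ ∈ P ∧
      ∀ b₁' ∈ B₁, x - b₁ + b₁' ∈ P → ∃ b₂' ∈ B₂, x - b₂ + b₂' = x - b₁ + b₁'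

/-!
Since `0 ∈ B`, every window `x - b + B` with `x - b ∈ P` meets `P`, so the opening `O_B g` vanishes
at `x` exactly when each such window contains a pixel of `P` where `g` vanishes. Weak shift
inclusion turns a zero found in a `B₁`-window into one in the corresponding `B₂`-window. Conversely,
if it fails at `x` and `b₂`, the indicator of `x - b₂ + B₂` has a zero in every `B₁`-window, so its
`B₁`-opening vanishes at `x`, while its `B₂`-opening does not.
-/

open scoped Pointwise

private lemma finite_setOf_exists_mem_finset {ι α : Type*} (B : Finset ι) (p : ι → Prop)
    (f : ι → α) : {y | ∃ b ∈ B, p b ∧ f b = y}.Finite :=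
  (B.finite_toSet.image f).subset <| by
    rintro y ⟨b, hb, -, rfl⟩
    exact ⟨b, hb, rfl⟩

lemma mErosion_eq_zero_iff {P : Set M} {B : Finset M} {g : M → ℝ≥0} {x : M}
    (hx : ∃ b ∈ B, x + b ∈ P) :
    mErosion P B g x = 0 ↔ ∃ b ∈ B, x + b ∈ P ∧ g (x + b) = 0 := by
  obtain ⟨b, hb, hxb⟩ := hx
  have hne : {y | ∃ b ∈ B, x + b ∈ P ∧ g (x + b) = y}.Nonempty := ⟨_, b, hb, hxb, rfl⟩
  constructor
  · intro h
    obtain ⟨b, hb, hxb, hgb⟩ := hne.csInf_mem (finite_setOf_exists_mem_finset B _ _)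
    exact ⟨b, hb, hxb, hgb.trans h⟩
  · intro h
    exact csInf_eq_bot_of_bot_mem h

lemma mDilation_eq_zero_iff {P : Set M} {B : Finset M} {g : M → ℝ≥0} {x : M} :
    mDilation P B g x = 0 ↔ ∀ b ∈ B, x - b ∈ P → g (x - b) = 0 := by
  rw [mDilation, ← nonpos_iff_eq_zero,
    csSup_le_iff' (finite_setOf_exists_mem_finset B _ _).bddAbove]
  simp only [Set.mem_ofPred_eq, forall_exists_index, and_imp, nonpos_iff_eq_zero]
  exact ⟨fun h b hb hxb => h _ b hb hxb rfl, fun h _ b hb hxb hy => hy ▸ h b hb hxb⟩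

lemma mOpening_eq_zero_iff {P : Set M} {B : Finset M} {g : M → ℝ≥0} {x : M} (h0 : (0 : M) ∈ B) :
    mOpening P B g x = 0 ↔
      ∀ b ∈ B, x - b ∈ P → ∃ b' ∈ B, x - b + b' ∈ P ∧ g (x - b + b') = 0 := by
  rw [mOpening, mDilation_eq_zero_iff]
  refine forall₂_congr fun b _ => imp_congr_right fun hxb => mErosion_eq_zero_iff ?_
  exact ⟨0, h0, by rwa [add_zero]⟩

lemma mOpening_indicator_vadd_ne_zero {P : Set M} {B : Finset M} {x b : M} (h0 : (0 : M) ∈ B)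
    (hb : b ∈ B) (hxb : x - b ∈ P) :
    mOpening P B (((x - b) +ᵥ (B : Set M)).indicator 1) x ≠ 0 := by
  rw [Ne, mOpening_eq_zero_iff h0]
  push Not
  refine ⟨b, hb, hxb, fun b' hb' _ => ?_⟩
  have hmem : x - b + b' ∈ (x - b) +ᵥ (B : Set M) := ⟨b', hb', rfl⟩
  rw [Set.indicator_of_mem hmem]
  exact one_ne_zero

lemma mOpening_eq_zero_mono_of_weakShiftNeg {P : Set M} {B₁ B₂ : Finset M}
    (h1 : (0 : M) ∈ B₁) (h2 : (0 : M) ∈ B₂) (hws : weakShiftNeg P B₁ B₂) (g : M → ℝ≥0) {x : M}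
    (hx : x ∈ P) (hg : mOpening P B₁ g x = 0) : mOpening P B₂ g x = 0 := by
  rw [mOpening_eq_zero_iff h1] at hg
  rw [mOpening_eq_zero_iff h2]
  intro b₂ hb₂ hxb₂
  obtain ⟨b₁, hb₁, hxb₁, hshift⟩ := hws x hx b₂ hb₂ hxb₂
  obtain ⟨b₁', hb₁', hP, hzero⟩ := hg b₁ hb₁ hxb₁
  obtain ⟨b₂', hb₂', heq⟩ := hshift b₁' hb₁' hP
  exact ⟨b₂', hb₂', heq ▸ hP, heq ▸ hzero⟩

lemma weakShiftNeg_of_mOpening_eq_zero_mono {P : Set M} {B₁ B₂ : Finset M}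
    (h1 : (0 : M) ∈ B₁) (h2 : (0 : M) ∈ B₂)
    (habs : ∀ g : M → ℝ≥0, ∀ x ∈ P, mOpening P B₁ g x = 0 → mOpening P B₂ g x = 0) :
    weakShiftNeg P B₁ B₂ := by
  intro x hx b₂ hb₂ hxb₂
  by_contra hfail
  push Not at hfail
  set S : Set M := (x - b₂) +ᵥ (B₂ : Set M)
  have hS : mOpening P B₁ (S.indicator 1) x = 0 := by
    rw [mOpening_eq_zero_iff h1]
    intro b₁ hb₁ hxb₁
    obtain ⟨b₁', hb₁', hP, hout⟩ := hfail b₁ hb₁ hxb₁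
    refine ⟨b₁', hb₁', hP, Set.indicator_of_notMem ?_ _⟩
    rintro ⟨b₂', hb₂', heq⟩
    exact hout b₂' hb₂' heq
  exact mOpening_indicator_vadd_ne_zero h2 hb₂ hxb₂ (habs _ x hx hS)

theorem weakShiftNeg_iff_opening_zero_mono_general (P : Set M) (B₁ B₂ : Finset M)
    (h1 : (0 : M) ∈ B₁) (h2 : (0 : M) ∈ B₂) :
    weakShiftNeg P B₁ B₂ ↔
      ∀ (g : M → ℝ≥0), ∀ x ∈ P, mOpening P B₁ g x = 0 → mOpening P B₂ g x = 0 :=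
  ⟨fun hws g _ hx => mOpening_eq_zero_mono_of_weakShiftNeg h1 h2 hws g hx,
    weakShiftNeg_of_mOpening_eq_zero_mono h1 h2⟩

/-- Weak negative shift inclusion is equivalent to the absorption property for openings. -/
theorem weakShiftNeg_iff_opening_zero_mono (P : Set M) (B₁ B₂ : Finset M)
    (h1 : (0 : M) ∈ B₁) (h2 : (0 : M) ∈ B₂) (hsub : B₁ ⊆ B₂) :
    weakShiftNeg P B₁ B₂ ↔
      ∀ (g : M → ℝ≥0), ∀ x ∈ P, mOpening P B₁ g x = 0 → mOpening P B₂ g x = 0 :=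
  weakShiftNeg_iff_opening_zero_mono_general P B₁ B₂ h1 h2
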